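/- For every ε ∈ (0,1), the cubic H(y) = b(ε) + 6y − 15y² + 8y³ has exactly one root in the open interval (y₁(ε), y₂(ε)); this root ȳ is negative and lies in (−1/8, 0). -/

import Mathlib

/-!
Write `g(y) = b − 3y² + 2y³`, so that `H(y) = g(y) + 6y(1 − y)²`, and `s = √(4 − 3ε²)`.
Then `g = 2(y − y₁)(y − y₂)(y − (1 + s)/2)` is positive on `(y₁, y₂)`, so a root of `H` there
is negative. Since `H' = 6(1 − y)(1 − 4y)`, `H` is strictly increasing on `(−∞, 1/4]`; as
`H(−1/8) = b − 1 < 0 < b = H(0)` and `H(y₁) = 6y₁(1 − y₁)² < 0`, its unique negative root lies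
in `(−1/8, 0)` and to the right of `y₁`.
-/

/-- The parameter `b(ε) = 1/2 − ((1 − 3ε²)/4)·√(4 − 3ε²)` of the Sasaki–Einstein
metric `Y^{p,q}`, with `ε = q/p`. -/
noncomputable def ypqB (ε : ℝ) : ℝ :=
  1/2 - ((1 - 3*ε^2)/4) * Real.sqrt (4 - 3*ε^2)

/-- The endpoint `y₁(ε) = (2 − 3ε − √(4 − 3ε²))/4`. -/
noncomputable def ypqY1 (ε : ℝ) : ℝ := (2 - 3*ε - Real.sqrt (4 - 3*ε^2))/4

/-- The endpoint `y₂(ε) = (2 + 3ε − √(4 − 3ε²))/4`. -/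
noncomputable def ypqY2 (ε : ℝ) : ℝ := (2 + 3*ε - Real.sqrt (4 - 3*ε^2))/4

def levelCubic (b y : ℝ) : ℝ := b + 6*y - 15*y^2 + 8*y^3

def metricCubic (b y : ℝ) : ℝ := b - 3*y^2 + 2*y^3

section Cubic

variable {b y : ℝ}

theorem levelCubic_eq_metricCubic_add (b y : ℝ) :
    levelCubic b y = metricCubic b y + 6 * y * (1 - y) ^ 2 := by
  unfold levelCubic metricCubic
  ring

theorem strictMonoOn_levelCubic (b : ℝ) : StrictMonoOn (levelCubic b) (Set.Iic (1/4)) := by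
  intro x (hx : x ≤ 1/4) y (hy : y ≤ 1/4) hxy
  have hQ : 0 < 6 - 15*(x+y) + 8*(x^2+x*y+y^2) := by
    nlinarith [mul_pos (sub_pos.2 hxy) (sub_pos.2 hxy),
      mul_nonneg (sub_nonneg.2 hx) (sub_nonneg.2 hy)]
  have hdiff : levelCubic b y - levelCubic b x
      = (y - x) * (6 - 15*(x+y) + 8*(x^2+x*y+y^2)) := by
    unfold levelCubic
    ring
  nlinarith [mul_pos (sub_pos.2 hxy) hQ]

theorem exists_levelCubic_eq_zero (hb0 : 0 < b) (hb1 : b < 1) :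
    ∃ y ∈ Set.Ioo (-1/8 : ℝ) 0, levelCubic b y = 0 := by
  have hcont : ContinuousOn (levelCubic b) (Set.Icc (-1/8) 0) := by
    unfold levelCubic
    fun_prop
  have hsign : (0 : ℝ) ∈ Set.Ioo (levelCubic b (-1/8)) (levelCubic b 0) := by
    unfold levelCubic
    constructor <;> linarith
  exact intermediate_value_Ioo (by norm_num) hcont hsign

theorem neg_of_levelCubic_eq_zero (hH : levelCubic b y = 0) (hg : 0 < metricCubic b y) :
    y < 0 := by
  rw [levelCubic_eq_metricCubic_add] at hH
  by_contra! hy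
  nlinarith [mul_nonneg hy (sq_nonneg (1 - y))]

theorem levelCubic_neg_of_metricCubic_eq_zero (hy : y < 0) (hg : metricCubic b y = 0) :
    levelCubic b y < 0 := by
  rw [levelCubic_eq_metricCubic_add, hg, zero_add]
  have : 0 < (1 - y) ^ 2 := by nlinarith
  nlinarith

end Cubic

section Ypq

variable {ε : ℝ}

theorem metricCubic_ypqB (h : 3 * ε ^ 2 ≤ 4) (y : ℝ) :
    metricCubic (ypqB ε) y
      = 2 * (y - ypqY1 ε) * (y - ypqY2 ε) * (y - (1 + √(4 - 3 * ε ^ 2)) / 2) := by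
  have hs := Real.sq_sqrt (show 0 ≤ 4 - 3 * ε ^ 2 by linarith)
  unfold metricCubic ypqB ypqY1 ypqY2
  linear_combination ((3/8) * y + (√(4 - 3 * ε ^ 2) - 3) / 16) * hs

theorem sqrt_four_sub_mem_Ioo (hε : ε ∈ Set.Ioo 0 1) : √(4 - 3 * ε ^ 2) ∈ Set.Ioo 1 2 := by
  obtain ⟨hε0, hε1⟩ := hε
  constructor
  · rw [Real.lt_sqrt zero_le_one]
    nlinarith
  · rw [Real.sqrt_lt' two_pos]
    nlinarith

theorem ypqB_mem_Ioo (hε : ε ∈ Set.Ioo 0 1) : ypqB ε ∈ Set.Ioo 0 1 := by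
  obtain ⟨hε0, hε1⟩ := hε
  set s := √(4 - 3 * ε ^ 2) with hs_def
  have hs : s ^ 2 = 4 - 3 * ε ^ 2 := Real.sq_sqrt (by nlinarith)
  have hpos : 0 < ε ^ 2 * (1 - ε ^ 2) ^ 2 := by
    have : 0 < 1 - ε ^ 2 := by nlinarith
    positivity
  have hu : ((1 - 3 * ε ^ 2) * s) ^ 2 = 4 - 27 * (ε ^ 2 * (1 - ε ^ 2) ^ 2) := by
    linear_combination (1 - 3 * ε ^ 2) ^ 2 * hs
  have hu2 : |(1 - 3 * ε ^ 2) * s| < 2 := abs_lt_of_sq_lt_sq (by linarith) zero_le_two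
  rw [abs_lt] at hu2
  unfold ypqB
  rw [← hs_def]
  constructor <;> linarith

theorem ypqY1_neg (hε : ε ∈ Set.Ioo 0 1) : ypqY1 ε < 0 := by
  obtain ⟨hε0, hε1⟩ := hε
  have hs : √(4 - 3 * ε ^ 2) ^ 2 = 4 - 3 * ε ^ 2 := Real.sq_sqrt (by nlinarith)
  have hs0 := Real.sqrt_nonneg (4 - 3 * ε ^ 2)
  unfold ypqY1
  nlinarith

theorem ypqY2_pos (hε : ε ∈ Set.Ioo 0 1) : 0 < ypqY2 ε := by
  have := (sqrt_four_sub_mem_Ioo hε).2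
  unfold ypqY2
  linarith [hε.1]

theorem metricCubic_ypqB_ypqY1 (hε : ε ∈ Set.Ioo 0 1) : metricCubic (ypqB ε) (ypqY1 ε) = 0 := by
  rw [metricCubic_ypqB (by nlinarith [hε.1, hε.2]), sub_self, mul_zero, zero_mul, zero_mul]

theorem metricCubic_ypqB_pos (hε : ε ∈ Set.Ioo 0 1) {y : ℝ}
    (hy : y ∈ Set.Ioo (ypqY1 ε) (ypqY2 ε)) : 0 < metricCubic (ypqB ε) y := by
  have hs := (sqrt_four_sub_mem_Ioo hε).1
  have hy3 : y < (1 + √(4 - 3 * ε ^ 2)) / 2 := by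
    have := hy.2
    unfold ypqY2 at this
    linarith [hε.2]
  rw [metricCubic_ypqB (by nlinarith [hε.1, hε.2])]
  have h12 : 0 < (y - ypqY1 ε) * (ypqY2 ε - y) := mul_pos (sub_pos.2 hy.1) (sub_pos.2 hy.2)
  nlinarith [mul_pos h12 (sub_pos.2 hy3)]

end Ypq

/-- For every `ε ∈ (0,1)`, the cubic `H(y) = b(ε) + 6y − 15y² + 8y³` has exactly
one root in the open interval `(y₁(ε), y₂(ε))`; this root `ȳ` is negative and
lies in `(−1/8, 0)`. -/
theorem ypq_unique_minimal_level :
    ∀ ε ∈ Set.Ioo (0 : ℝ) 1, ∃ ybar : ℝ,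
      ybar ∈ Set.Ioo (ypqY1 ε) (ypqY2 ε) ∧
      ypqB ε + 6*ybar - 15*ybar^2 + 8*ybar^3 = 0 ∧
      ybar ∈ Set.Ioo (-1/8 : ℝ) 0 ∧
      ∀ y ∈ Set.Ioo (ypqY1 ε) (ypqY2 ε),
        ypqB ε + 6*y - 15*y^2 + 8*y^3 = 0 → y = ybar := by
  intro ε hε
  obtain ⟨hb0, hb1⟩ := ypqB_mem_Ioo hε
  obtain ⟨ybar, ⟨hybar8, hybar0⟩, hroot⟩ := exists_levelCubic_eq_zero hb0 hb1
  have hmono := strictMonoOn_levelCubic (ypqB ε)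
  have hIic {y : ℝ} (hy : y < 0) : y ∈ Set.Iic (1/4 : ℝ) := by
    rw [Set.mem_Iic]
    linarith
  have hy1 : ypqY1 ε < ybar := by
    rw [← hmono.lt_iff_lt (hIic (ypqY1_neg hε)) (hIic hybar0), hroot]
    exact levelCubic_neg_of_metricCubic_eq_zero (ypqY1_neg hε) (metricCubic_ypqB_ypqY1 hε)
  refine ⟨ybar, ⟨hy1, hybar0.trans (ypqY2_pos hε)⟩, hroot, ⟨hybar8, hybar0⟩, ?_⟩
  intro y hy hyroot
  have hyneg : y < 0 := neg_of_levelCubic_eq_zero hyroot (metricCubic_ypqB_pos hε hy)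
  exact hmono.injOn (hIic hyneg) (hIic hybar0) (hyroot.trans hroot.symm)
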